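/- arXiv:1604.01831 — 5 statements merged into one kernel-verified Lean document; each statement's English description precedes it below -/
import Mathlib

section
/- Let ν ≥ 0 and let w : ℤ × ℝ → ℂ be measurable. Define W(t,k,η) = w(k, η + k·t) · exp(−ν ∫₀ᵗ (k² + (η + k·s)²) ds). Then for every t ≥ 0, ∑_{k ≠ 0} ∫_ℝ |W(t,k,η)|² dη ≤ e^{−ν t³/6} · ∑_{k ≠ 0} ∫_ℝ |w(k,η)|² dη (as an inequality of extended nonnegative reals). -/
open MeasureTheory
open scoped ENNReal NNReal

/-!
Along the characteristic `η ↦ η + k t` the Fourier mode is damped by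
`exp (-ν ∫₀ᵗ (k² + (η + k s)²) ds)`. Completing the square,
`∫₀ᵗ (k² + (η + k s)²) ds = k² t + t (η + k t / 2)² + k² t³ / 12 ≥ k² t³ / 12 ≥ t³ / 12`
for `k ≠ 0`, uniformly in `η`; squaring gives the factor `e^{-ν t³ / 6}`, and the shift
`η ↦ η + k t` preserves Lebesgue measure.
-/

theorem integral_couette_symbol (k η t : ℝ) :
    ∫ s in (0 : ℝ)..t, (k ^ 2 + (η + k * s) ^ 2) =
      (k ^ 2 + η ^ 2) * t + η * k * t ^ 2 + k ^ 2 * t ^ 3 / 3 := by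
  have hderiv : ∀ s : ℝ, HasDerivAt
      (fun s : ℝ => (k ^ 2 + η ^ 2) * s + η * k * s ^ 2 + k ^ 2 * s ^ 3 / 3)
      (k ^ 2 + (η + k * s) ^ 2) s := fun s => by
    have h : HasDerivAt
        (fun s : ℝ => (k ^ 2 + η ^ 2) * s + η * k * s ^ 2 + k ^ 2 * s ^ 3 / 3)
        ((k ^ 2 + η ^ 2) * 1 + η * k * (2 * s ^ 1) + k ^ 2 * (3 * s ^ 2) / 3) s :=
      (((hasDerivAt_id s).const_mul _).add ((hasDerivAt_pow 2 s).const_mul _)).add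
        (((hasDerivAt_pow 3 s).const_mul _).div_const 3)
    exact h.congr_deriv (by ring)
  rw [intervalIntegral.integral_eq_sub_of_hasDerivAt (fun s _ => hderiv s)
    (Continuous.intervalIntegrable (by fun_prop) 0 t)]
  ring

theorem mul_cube_div_twelve_le_integral_couette_symbol (k η : ℝ) {t : ℝ} (ht : 0 ≤ t) :
    k ^ 2 * t ^ 3 / 12 ≤ ∫ s in (0 : ℝ)..t, (k ^ 2 + (η + k * s) ^ 2) := by
  rw [integral_couette_symbol]
  have hsq : 0 ≤ t * (η + k * t / 2) ^ 2 := by positivity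
  have hlin : 0 ≤ k ^ 2 * t := by positivity
  nlinarith

theorem sq_nnnorm_mul_exp_le (z : ℂ) {a b : ℝ} (hab : a ≤ b) :
    (‖z * (Real.exp a : ℂ)‖₊ : ℝ≥0∞) ^ 2 ≤
      ENNReal.ofReal (Real.exp (2 * b)) * (‖z‖₊ : ℝ≥0∞) ^ 2 := by
  have hexp : (‖(Real.exp a : ℂ)‖₊ : ℝ≥0∞) ^ 2 = ENNReal.ofReal (Real.exp (2 * a)) := by
    rw [← enorm_eq_nnnorm, ← ofReal_norm, Complex.norm_real,
      Real.norm_of_nonneg (Real.exp_nonneg _), ← ENNReal.ofReal_pow (Real.exp_nonneg _),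
      ← Real.exp_nat_mul, Nat.cast_ofNat]
  rw [nnnorm_mul, ENNReal.coe_mul, mul_pow, mul_comm, hexp]
  gcongr

theorem lintegral_sq_nnnorm_le_of_le_shift {f g : ℝ → ℂ} {c : ℝ≥0∞} (hc : c ≠ ∞) (a : ℝ)
    (hfg : ∀ η, (‖f η‖₊ : ℝ≥0∞) ^ 2 ≤ c * (‖g (η + a)‖₊ : ℝ≥0∞) ^ 2) :
    ∫⁻ η, (‖f η‖₊ : ℝ≥0∞) ^ 2 ≤ c * ∫⁻ η, (‖g η‖₊ : ℝ≥0∞) ^ 2 :=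
  calc ∫⁻ η, (‖f η‖₊ : ℝ≥0∞) ^ 2
      ≤ ∫⁻ η, c * (‖g (η + a)‖₊ : ℝ≥0∞) ^ 2 := lintegral_mono hfg
    _ = c * ∫⁻ η, (‖g (η + a)‖₊ : ℝ≥0∞) ^ 2 := lintegral_const_mul' _ _ hc
    _ = c * ∫⁻ η, (‖g η‖₊ : ℝ≥0∞) ^ 2 := by
      rw [lintegral_add_right_eq_self (fun η => (‖g η‖₊ : ℝ≥0∞) ^ 2) a]

theorem stmt_3_general (ν : ℝ) (hν : 0 ≤ ν) (w : ℤ × ℝ → ℂ)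
    (W : ℝ → ℤ → ℝ → ℂ)
    (hW : ∀ (t : ℝ) (k : ℤ) (η : ℝ), W t k η =
      w (k, η + (k : ℝ) * t) *
        (Real.exp (-ν * ∫ s in (0:ℝ)..t, ((k : ℝ) ^ 2 + (η + (k : ℝ) * s) ^ 2)) : ℂ)) :
    ∀ t : ℝ, 0 ≤ t →
      ∑' k : {k : ℤ // k ≠ 0}, ∫⁻ η : ℝ, (‖W t (k : ℤ) η‖₊ : ℝ≥0∞) ^ 2
        ≤ ENNReal.ofReal (Real.exp (-(ν * t ^ 3 / 6))) *
            ∑' k : {k : ℤ // k ≠ 0}, ∫⁻ η : ℝ, (‖w ((k : ℤ), η)‖₊ : ℝ≥0∞) ^ 2 := by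
  intro t ht
  rw [← ENNReal.tsum_mul_left]
  refine ENNReal.tsum_le_tsum fun ⟨k, hk⟩ => ?_
  have hk2 : (1 : ℝ) ≤ (k : ℝ) ^ 2 := by
    exact_mod_cast (one_le_sq_iff_one_le_abs k).2 (Int.one_le_abs hk)
  refine lintegral_sq_nnnorm_le_of_le_shift ENNReal.ofReal_ne_top ((k : ℝ) * t) fun η => ?_
  have hdecay : t ^ 3 / 12 ≤ ∫ s in (0 : ℝ)..t, ((k : ℝ) ^ 2 + (η + (k : ℝ) * s) ^ 2) :=
    le_trans (by nlinarith [pow_nonneg ht 3])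
      (mul_cube_div_twelve_le_integral_couette_symbol (k : ℝ) η ht)
  rw [hW, show -(ν * t ^ 3 / 6) = 2 * -(ν * (t ^ 3 / 12)) by ring]
  exact sq_nnnorm_mul_exp_le _ (by nlinarith [mul_le_mul_of_nonneg_left hdecay hν])

/-- `L²` enhanced dissipation for the nonzero-in-`x` modes of the linearized
Couette flow: `∑_{k ≠ 0} ∫ |W(t,k,η)|² dη ≤ e^{−ν t³/6} ∑_{k ≠ 0} ∫ |w(k,η)|² dη`. -/
theorem stmt_3 (ν : ℝ) (hν : 0 ≤ ν) (w : ℤ × ℝ → ℂ) (hw : Measurable w)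
    (W : ℝ → ℤ → ℝ → ℂ)
    (hW : ∀ (t : ℝ) (k : ℤ) (η : ℝ), W t k η =
      w (k, η + (k : ℝ) * t) *
        (Real.exp (-ν * ∫ s in (0:ℝ)..t, ((k : ℝ) ^ 2 + (η + (k : ℝ) * s) ^ 2)) : ℂ)) :
    ∀ t : ℝ, 0 ≤ t →
      ∑' k : {k : ℤ // k ≠ 0}, ∫⁻ η : ℝ, (‖W t (k : ℤ) η‖₊ : ℝ≥0∞) ^ 2
        ≤ ENNReal.ofReal (Real.exp (-(ν * t ^ 3 / 6))) *
            ∑' k : {k : ℤ // k ≠ 0}, ∫⁻ η : ℝ, (‖w ((k : ℤ), η)‖₊ : ℝ≥0∞) ^ 2 :=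
  stmt_3_general ν hν w W hW
end

section
/- Let ν ≥ 0 and let w : ℤ × ℝ → ℂ be any function. Define W(t,k,η) = w(k, η + k·t) · exp(−ν ∫₀ᵗ (k² + (η + k·s)²) ds), and the stream-function mode Ψ(t,k,η) = W(t,k,η)/(k² + η²). Then for every integer k with |k| ≥ 1, every η ∈ ℝ, and every t ≥ 0, (1 + t²)·|Ψ(t,k,η)| ≤ 4·(1 + (η + k·t)²)·|w(k, η + k·t)|. -/
/-!
Since `|k| ≥ 1`, `|t| ≤ |k t| = |ξ - η|` with `ξ = η + k t`, and Peetre's inequality gives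
`1 + t² ≤ 2 (1 + ξ²)(1 + η²)`. The factor `1 + η²` is absorbed by the denominator, as
`1 + η² ≤ 2 (k² + η²)`, and the viscous factor `exp (-ν ∫ …)` is at most `1` for `ν ≥ 0`.
-/

lemma one_add_sq_sub_le (x y : ℝ) : 1 + (x - y) ^ 2 ≤ 2 * (1 + x ^ 2) * (1 + y ^ 2) := by
  nlinarith [sq_nonneg (x + y), sq_nonneg (x * y)]

lemma one_add_sq_le_two_mul_sq_add_sq {k : ℝ} (hk : 1 ≤ k ^ 2) (η : ℝ) :
    1 + η ^ 2 ≤ 2 * (k ^ 2 + η ^ 2) := by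
  nlinarith [sq_nonneg η]

lemma one_add_sq_le_four_mul {k : ℝ} (hk : 1 ≤ k ^ 2) (η t : ℝ) :
    1 + t ^ 2 ≤ 4 * (1 + (η + k * t) ^ 2) * (k ^ 2 + η ^ 2) :=
  calc 1 + t ^ 2 ≤ 1 + ((η + k * t) - η) ^ 2 := by
        nlinarith [mul_le_mul_of_nonneg_right hk (sq_nonneg t)]
    _ ≤ 2 * (1 + (η + k * t) ^ 2) * (1 + η ^ 2) := one_add_sq_sub_le _ _
    _ ≤ 2 * (1 + (η + k * t) ^ 2) * (2 * (k ^ 2 + η ^ 2)) := by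
        gcongr; exact one_add_sq_le_two_mul_sq_add_sq hk η
    _ = 4 * (1 + (η + k * t) ^ 2) * (k ^ 2 + η ^ 2) := by ring

lemma exp_neg_mul_integral_le_one {ν : ℝ} (hν : 0 ≤ ν) (k η : ℝ) {t : ℝ} (ht : 0 ≤ t) :
    Real.exp (-ν * ∫ s in (0:ℝ)..t, (k ^ 2 + (η + k * s) ^ 2)) ≤ 1 := by
  have hI : 0 ≤ ∫ s in (0:ℝ)..t, (k ^ 2 + (η + k * s) ^ 2) :=
    intervalIntegral.integral_nonneg ht fun s _ => by positivity
  exact Real.exp_le_one_iff.mpr (by nlinarith)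

/-- Pointwise inviscid damping for the stream-function mode
`Ψ(t,k,η) = W(t,k,η)/(k² + η²)`:
`(1 + t²) |Ψ(t,k,η)| ≤ 4 (1 + (η + k t)²) |w(k, η + k t)|` for `|k| ≥ 1`, `t ≥ 0`. -/
theorem stmt_5 (ν : ℝ) (hν : 0 ≤ ν) (w : ℤ × ℝ → ℂ)
    (W Ψ : ℝ → ℤ → ℝ → ℂ)
    (hW : ∀ (t : ℝ) (k : ℤ) (η : ℝ), W t k η =
      w (k, η + (k : ℝ) * t) *
        (Real.exp (-ν * ∫ s in (0:ℝ)..t, ((k : ℝ) ^ 2 + (η + (k : ℝ) * s) ^ 2)) : ℂ))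
    (hΨ : ∀ (t : ℝ) (k : ℤ) (η : ℝ), Ψ t k η =
      W t k η / (((k : ℝ) ^ 2 + η ^ 2 : ℝ) : ℂ)) :
    ∀ (k : ℤ), 1 ≤ |k| → ∀ (η t : ℝ), 0 ≤ t →
      (1 + t ^ 2) * ‖Ψ t k η‖
        ≤ 4 * (1 + (η + (k : ℝ) * t) ^ 2) * ‖w (k, η + (k : ℝ) * t)‖ := by
  intro k hk η t ht
  have hk2 : (1 : ℝ) ≤ (k : ℝ) ^ 2 := by
    rw [one_le_sq_iff_one_le_abs, ← Int.cast_abs]; exact_mod_cast hk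
  have hD : (0 : ℝ) < (k : ℝ) ^ 2 + η ^ 2 := by positivity
  have hE := exp_neg_mul_integral_le_one hν (k : ℝ) η ht
  have hΨ_le : ‖Ψ t k η‖ ≤ ‖w (k, η + (k : ℝ) * t)‖ / ((k : ℝ) ^ 2 + η ^ 2) := by
    rw [hΨ, hW, norm_div, norm_mul, Complex.norm_real, Complex.norm_real, Real.norm_of_nonneg hD.le,
      Real.norm_of_nonneg (Real.exp_nonneg _)]
    gcongr
    exact mul_le_of_le_one_right (norm_nonneg _) hE
  calc (1 + t ^ 2) * ‖Ψ t k η‖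
      ≤ (1 + t ^ 2) * (‖w (k, η + (k : ℝ) * t)‖ / ((k : ℝ) ^ 2 + η ^ 2)) := by gcongr
    _ ≤ 4 * (1 + (η + (k : ℝ) * t) ^ 2) * ((k : ℝ) ^ 2 + η ^ 2)
          * (‖w (k, η + (k : ℝ) * t)‖ / ((k : ℝ) ^ 2 + η ^ 2)) := by
        gcongr; exact one_add_sq_le_four_mul hk2 η t
    _ = 4 * (1 + (η + (k : ℝ) * t) ^ 2) * ‖w (k, η + (k : ℝ) * t)‖ := by
        field_simp
end

section
/- There exist constants c ∈ (0,1) and C ≥ 1 such that for every ν ∈ (0,1] there is a function M : [0,∞) × ℤ × ℝ → ℝ, differentiable in its first and third arguments, satisfying: (1) M(0,k,ξ) = 1 and M(t,0,ξ) = 1 for all t, k, ξ; (2) c ≤ M(t,k,ξ) ≤ 1 for all t, k, ξ; (3) for all k ≠ 0, −∂ₜM(t,k,ξ)/M(t,k,ξ) ≥ |k|/(k² + (ξ − kt)²); (4) for all k ≠ 0, |∂_ξ M(t,k,ξ)| ≤ (C/|k|)·M(t,k,ξ); (5) for all k ≠ 0 and all t, η, 1 ≤ C·ν^{−1/6}·(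 √(−∂ₜM(t,k,η)·M(t,k,η)) + ν^{1/2}·√(k² + (η − kt)²) ); (6) for all k ≠ 0 and all t, η, ξ, √(−∂ₜM(t,k,η)·M(t,k,η)) ≤ C·√(1 + (η − ξ)²)·√(−∂ₜM(t,k,ξ)·M(t,k,ξ)). -/
/-!
The multiplier is `M = exp (-E)` where `E(t, k, ξ)` integrates, from `0` to `t`, the rate
`G = |k| / (k² + (ξ - k s)²) + ν^{1/3} / (1 + ν^{2/3} (s - ξ/k)²)`. Both summands are Lorentzians
in `s - ξ/k`, so `E` is a sum of arctangents, bounded by `2π`: this gives `c = e^{-2π} ≤ M ≤ 1`,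
and `-Ṁ/M = G` is (3). The ξ-derivative of `E` is a difference of Lorentzians divided by `k`,
which gives (4). For (5), either `|t - η/k| ≤ ν^{-1/3}`, where the second Lorentzian is at least
`ν^{1/3}/2`, or `|η - k t| ≥ |t - η/k| > ν^{-1/3}`. For (6), Peetre's inequality
`1 + x² ≤ 2 (1 + y²)(1 + (x - y)²)` moves the centre of each Lorentzian from `ξ` to `η`.
-/

open Real

noncomputable def lorentzian (a x : ℝ) : ℝ := a / (1 + (a * x) ^ 2)

/-- `∫₀ᵗ lorentzian a (s - z) ds` in closed form. -/
noncomputable def lorentzIntegral (a z t : ℝ) : ℝ := arctan (a * (t - z)) + arctan (a * z)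

section Lorentzian

variable {a : ℝ}

lemma lorentzian_nonneg (ha : 0 ≤ a) (x : ℝ) : 0 ≤ lorentzian a x := by
  unfold lorentzian; positivity

lemma lorentzian_le (ha : 0 ≤ a) (x : ℝ) : lorentzian a x ≤ a :=
  div_le_self ha (by nlinarith [sq_nonneg (a * x)])

lemma half_le_lorentzian (ha : 0 ≤ a) {x : ℝ} (hx : |a * x| ≤ 1) : a / 2 ≤ lorentzian a x := by
  have : (a * x) ^ 2 ≤ 1 := by nlinarith [sq_abs (a * x), abs_nonneg (a * x)]
  exact div_le_div_of_nonneg_left ha (by positivity) (by linarith)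

lemma abs_lorentzian_sub_le (ha : 0 ≤ a) (x y : ℝ) : |lorentzian a x - lorentzian a y| ≤ a :=
  abs_sub_le_of_nonneg_of_le (lorentzian_nonneg ha x) (lorentzian_le ha x)
    (lorentzian_nonneg ha y) (lorentzian_le ha y)

lemma one_add_sq_le_two_mul (x y : ℝ) : 1 + x ^ 2 ≤ 2 * (1 + y ^ 2) * (1 + (x - y) ^ 2) := by
  nlinarith [sq_nonneg (x - 2 * y), sq_nonneg (y * (x - y) - 1), sq_nonneg (y * (x - y)),
    sq_nonneg (x - y), sq_nonneg y]

lemma lorentzian_le_mul_lorentzian (ha0 : 0 ≤ a) (ha1 : a ≤ 1) (x y : ℝ) :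
    lorentzian a x ≤ 2 * (1 + (x - y) ^ 2) * lorentzian a y := by
  have hscale : (a * (y - x)) ^ 2 ≤ (x - y) ^ 2 := by
    rw [mul_pow, show (y - x) ^ 2 = (x - y) ^ 2 by ring]
    exact mul_le_of_le_one_left (sq_nonneg _) (pow_le_one₀ ha0 ha1)
  have hpeetre := one_add_sq_le_two_mul (a * y) (a * x)
  rw [← mul_sub] at hpeetre
  unfold lorentzian
  rw [mul_div_assoc', div_le_div_iff₀ (by positivity) (by positivity)]
  calc a * (1 + (a * y) ^ 2) ≤ a * (2 * (1 + (a * x) ^ 2) * (1 + (x - y) ^ 2)) := by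
        gcongr
        exact hpeetre.trans (by gcongr)
    _ = 2 * (1 + (x - y) ^ 2) * a * (1 + (a * x) ^ 2) := by ring

end Lorentzian

section LorentzIntegral

variable {a z t : ℝ}

lemma lorentzIntegral_zero_right (a z : ℝ) : lorentzIntegral a z 0 = 0 := by
  simp [lorentzIntegral, mul_neg, arctan_neg]

lemma lorentzIntegral_nonneg (ha : 0 ≤ a) (ht : 0 ≤ t) : 0 ≤ lorentzIntegral a z t := by
  have : arctan (-(a * z)) ≤ arctan (a * (t - z)) := arctan_strictMono.monotone (by nlinarith)
  rw [arctan_neg] at this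
  unfold lorentzIntegral; linarith

lemma lorentzIntegral_le_pi (a z t : ℝ) : lorentzIntegral a z t ≤ π := by
  unfold lorentzIntegral
  linarith [arctan_lt_pi_div_two (a * (t - z)), arctan_lt_pi_div_two (a * z)]

lemma hasDerivAt_lorentzIntegral_time (a z t : ℝ) :
    HasDerivAt (lorentzIntegral a z) (lorentzian a (t - z)) t :=
  ((((hasDerivAt_id' t).sub_const z).const_mul a).arctan.add_const (arctan (a * z))).congr_deriv
    (by simp [lorentzian, div_eq_inv_mul])

lemma hasDerivAt_lorentzIntegral_center (a z t : ℝ) :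
    HasDerivAt (fun w => lorentzIntegral a w t) (lorentzian a z - lorentzian a (t - z)) z :=
  ((((hasDerivAt_id' z).const_sub t).const_mul a).arctan.add
    ((hasDerivAt_id' z).const_mul a).arctan).congr_deriv
    (by simp [lorentzian, div_eq_inv_mul]; ring)

end LorentzIntegral

/-- `∫₀ᵗ ghostRate b s k ξ ds` in closed form: for `b = ν^{1/3}` this is the exponent of the
paper's `M₁ M₂`. -/
noncomputable def ghostExponent (b t k ξ : ℝ) : ℝ :=
  lorentzIntegral 1 (ξ / k) t / |k| + lorentzIntegral b (ξ / k) t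

noncomputable def ghostRate (b t k ξ : ℝ) : ℝ :=
  lorentzian 1 (t - ξ / k) / |k| + lorentzian b (t - ξ / k)

noncomputable def ghostExponentSpaceDeriv (b t k ξ : ℝ) : ℝ :=
  ((lorentzian 1 (ξ / k) - lorentzian 1 (t - ξ / k)) / |k| +
    (lorentzian b (ξ / k) - lorentzian b (t - ξ / k))) / k

noncomputable def ghostMultiplier (b t : ℝ) (k : ℤ) (ξ : ℝ) : ℝ :=
  if k = 0 then 1 else exp (-ghostExponent b t k ξ)

section GhostExponent

variable {b t k ξ : ℝ}

lemma ghostExponent_zero_time (b k ξ : ℝ) : ghostExponent b 0 k ξ = 0 := by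
  simp [ghostExponent, lorentzIntegral_zero_right]

lemma ghostExponent_nonneg (hb : 0 ≤ b) (ht : 0 ≤ t) : 0 ≤ ghostExponent b t k ξ :=
  add_nonneg (div_nonneg (lorentzIntegral_nonneg zero_le_one ht) (abs_nonneg k))
    (lorentzIntegral_nonneg hb ht)

lemma ghostExponent_le_two_pi (hk : 1 ≤ |k|) : ghostExponent b t k ξ ≤ 2 * π := by
  have h₁ : lorentzIntegral 1 (ξ / k) t / |k| ≤ π :=
    (div_le_div_of_nonneg_right (lorentzIntegral_le_pi _ _ _) (abs_nonneg k)).trans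
      (div_le_self pi_pos.le hk)
  unfold ghostExponent
  linarith [lorentzIntegral_le_pi b (ξ / k) t]

lemma hasDerivAt_ghostExponent_time (b t k ξ : ℝ) :
    HasDerivAt (fun τ => ghostExponent b τ k ξ) (ghostRate b t k ξ) t :=
  ((hasDerivAt_lorentzIntegral_time 1 (ξ / k) t).div_const |k|).add
    (hasDerivAt_lorentzIntegral_time b (ξ / k) t)

lemma hasDerivAt_ghostExponent_space (b t k ξ : ℝ) :
    HasDerivAt (fun x => ghostExponent b t k x) (ghostExponentSpaceDeriv b t k ξ) ξ := by
  have hz : HasDerivAt (fun x : ℝ => x / k) (1 / k) ξ := (hasDerivAt_id' ξ).div_const k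
  have h₁ := (hasDerivAt_lorentzIntegral_center 1 (ξ / k) t).comp ξ hz
  have h₂ := (hasDerivAt_lorentzIntegral_center b (ξ / k) t).comp ξ hz
  exact ((h₁.div_const |k|).add h₂).congr_deriv (by unfold ghostExponentSpaceDeriv; ring)

lemma abs_ghostExponent_space_deriv_le (hb0 : 0 ≤ b) (hb1 : b ≤ 1) (hk : 1 ≤ |k|) :
    |ghostExponentSpaceDeriv b t k ξ| ≤ 2 / |k| := by
  have h₁ : |((lorentzian 1 (ξ / k) - lorentzian 1 (t - ξ / k)) / |k|)| ≤ 1 := by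
    rw [abs_div, abs_abs]
    exact (div_le_self (abs_nonneg _) hk).trans (abs_lorentzian_sub_le zero_le_one _ _)
  have h₂ := (abs_lorentzian_sub_le hb0 (ξ / k) (t - ξ / k)).trans hb1
  rw [ghostExponentSpaceDeriv, abs_div]
  gcongr
  exact (abs_add_le _ _).trans (by linarith)

end GhostExponent

section GhostRate

variable {b t k ξ : ℝ}

lemma ghostRate_nonneg (hb : 0 ≤ b) : 0 ≤ ghostRate b t k ξ :=
  add_nonneg (div_nonneg (lorentzian_nonneg zero_le_one _) (abs_nonneg k)) (lorentzian_nonneg hb _)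

lemma lorentzian_one_div_abs (hk : k ≠ 0) :
    lorentzian 1 (t - ξ / k) / |k| = |k| / (k ^ 2 + (ξ - k * t) ^ 2) := by
  rw [lorentzian, ← sq_abs k]
  field_simp
  rw [sq_abs]
  ring

lemma div_le_ghostRate (hb : 0 ≤ b) (hk : k ≠ 0) :
    |k| / (k ^ 2 + (ξ - k * t) ^ 2) ≤ ghostRate b t k ξ := by
  rw [← lorentzian_one_div_abs hk]
  exact le_add_of_nonneg_right (lorentzian_nonneg hb _)

lemma half_le_ghostRate (hb : 0 ≤ b) (h : |b * (t - ξ / k)| ≤ 1) : b / 2 ≤ ghostRate b t k ξ :=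
  (half_le_lorentzian hb h).trans
    (le_add_of_nonneg_left (div_nonneg (lorentzian_nonneg zero_le_one _) (abs_nonneg k)))

lemma ghostRate_le_mul_ghostRate (hb0 : 0 ≤ b) (hb1 : b ≤ 1) (hk : 1 ≤ |k|) (η : ℝ) :
    ghostRate b t k η ≤ 2 * (1 + (η - ξ) ^ 2) * ghostRate b t k ξ := by
  have hshift : (t - η / k - (t - ξ / k)) ^ 2 ≤ (η - ξ) ^ 2 := by
    rw [show t - η / k - (t - ξ / k) = (ξ - η) / k by ring, div_pow, ← sq_abs k,
      show (ξ - η) ^ 2 = (η - ξ) ^ 2 by ring]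
    exact div_le_self (sq_nonneg _) (one_le_pow₀ hk)
  have hmono : ∀ a, 0 ≤ a → a ≤ 1 → lorentzian a (t - η / k) ≤
      2 * (1 + (η - ξ) ^ 2) * lorentzian a (t - ξ / k) := fun a ha0 ha1 =>
    (lorentzian_le_mul_lorentzian ha0 ha1 _ _).trans
      (mul_le_mul_of_nonneg_right (by gcongr) (lorentzian_nonneg ha0 _))
  unfold ghostRate
  rw [mul_add, mul_div_assoc']
  gcongr
  · exact hmono 1 zero_le_one le_rfl
  · exact hmono b hb0 hb1

end GhostRate

section GhostMultiplier

variable {b t : ℝ} {k : ℤ} {ξ : ℝ}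

lemma ghostMultiplier_of_ne_zero (hk : k ≠ 0) :
    ghostMultiplier b t k ξ = exp (-ghostExponent b t k ξ) := if_neg hk

@[simp]
lemma ghostMultiplier_zero_freq (b t ξ : ℝ) : ghostMultiplier b t 0 ξ = 1 := if_pos rfl

lemma ghostMultiplier_zero_time (b : ℝ) (k : ℤ) (ξ : ℝ) : ghostMultiplier b 0 k ξ = 1 := by
  simp [ghostMultiplier, ghostExponent_zero_time]

lemma one_le_abs_intCast (hk : k ≠ 0) : 1 ≤ |(k : ℝ)| := by
  rw [← Int.cast_abs]; exact_mod_cast Int.one_le_abs hk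

lemma ghostMultiplier_pos (b t : ℝ) (k : ℤ) (ξ : ℝ) : 0 < ghostMultiplier b t k ξ := by
  unfold ghostMultiplier; split_ifs <;> positivity

lemma ghostMultiplier_le_one (hb : 0 ≤ b) (ht : 0 ≤ t) : ghostMultiplier b t k ξ ≤ 1 := by
  unfold ghostMultiplier; split_ifs
  · exact le_rfl
  · exact exp_le_one_iff.2 (neg_nonpos.2 (ghostExponent_nonneg hb ht))

lemma exp_neg_two_pi_le_ghostMultiplier (b t : ℝ) (k : ℤ) (ξ : ℝ) :
    exp (-(2 * π)) ≤ ghostMultiplier b t k ξ := by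
  unfold ghostMultiplier; split_ifs with hk
  · exact exp_le_one_iff.2 (by linarith [pi_pos])
  · exact exp_le_exp.2 (neg_le_neg (ghostExponent_le_two_pi (one_le_abs_intCast hk)))

lemma hasDerivAt_ghostMultiplier_time (b t : ℝ) (hk : k ≠ 0) (ξ : ℝ) :
    HasDerivAt (fun τ => ghostMultiplier b τ k ξ)
      (-(ghostRate b t k ξ * ghostMultiplier b t k ξ)) t := by
  simp only [ghostMultiplier_of_ne_zero hk]
  exact (hasDerivAt_ghostExponent_time b t k ξ).neg.exp.congr_deriv
    (by simp only [Pi.neg_apply]; ring)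

lemma hasDerivAt_ghostMultiplier_space (b t : ℝ) (hk : k ≠ 0) (ξ : ℝ) :
    HasDerivAt (fun x => ghostMultiplier b t k x)
      (-(ghostExponentSpaceDeriv b t k ξ * ghostMultiplier b t k ξ)) ξ := by
  simp only [ghostMultiplier_of_ne_zero hk]
  exact (hasDerivAt_ghostExponent_space b t k ξ).neg.exp.congr_deriv
    (by simp only [Pi.neg_apply]; ring)

lemma differentiableAt_ghostMultiplier_time (b t : ℝ) (k : ℤ) (ξ : ℝ) :
    DifferentiableAt ℝ (fun τ => ghostMultiplier b τ k ξ) t := by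
  by_cases hk : k = 0
  · simp [hk]
  · exact (hasDerivAt_ghostMultiplier_time b t hk ξ).differentiableAt

lemma differentiableAt_ghostMultiplier_space (b t : ℝ) (k : ℤ) (ξ : ℝ) :
    DifferentiableAt ℝ (fun x => ghostMultiplier b t k x) ξ := by
  by_cases hk : k = 0
  · simp [hk]
  · exact (hasDerivAt_ghostMultiplier_space b t hk ξ).differentiableAt

lemma neg_deriv_ghostMultiplier_time_div (hk : k ≠ 0) :
    -deriv (fun τ => ghostMultiplier b τ k ξ) t / ghostMultiplier b t k ξ = ghostRate b t k ξ := by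
  rw [(hasDerivAt_ghostMultiplier_time b t hk ξ).deriv, neg_neg,
    mul_div_cancel_right₀ _ (ghostMultiplier_pos b t k ξ).ne']

lemma neg_deriv_ghostMultiplier_time_mul (hk : k ≠ 0) :
    -deriv (fun τ => ghostMultiplier b τ k ξ) t * ghostMultiplier b t k ξ =
      ghostRate b t k ξ * ghostMultiplier b t k ξ ^ 2 := by
  rw [(hasDerivAt_ghostMultiplier_time b t hk ξ).deriv]; ring

lemma abs_deriv_ghostMultiplier_space_le (hb0 : 0 ≤ b) (hb1 : b ≤ 1) (hk : k ≠ 0) :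
    |deriv (fun x => ghostMultiplier b t k x) ξ| ≤ 2 / |(k : ℝ)| * ghostMultiplier b t k ξ := by
  rw [(hasDerivAt_ghostMultiplier_space b t hk ξ).deriv, abs_neg, abs_mul,
    abs_of_pos (ghostMultiplier_pos b t k ξ)]
  exact mul_le_mul_of_nonneg_right
    (abs_ghostExponent_space_deriv_le hb0 hb1 (one_le_abs_intCast hk))
    (ghostMultiplier_pos b t k ξ).le

end GhostMultiplier

section Dissipation

variable {s c C m k t η : ℝ}

/-- With `s = ν^{1/6}`: on the resonant set `|t - η/k| ≤ s⁻²` the rate is at least `s² / 2`;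
off it, `|η - k t| ≥ |t - η/k| > s⁻²`. -/
lemma one_le_enhanced_dissipation (hs0 : 0 < s) (hc : 0 < c) (hcm : c ≤ m) (hC : 1 ≤ C)
    (hCc : 2 ≤ C * c) (hk : 1 ≤ |k|) :
    1 ≤ C * s⁻¹ * (√(ghostRate (s ^ 2) t k η * m ^ 2) + s ^ 3 * √(k ^ 2 + (η - k * t) ^ 2)) := by
  by_cases hres : |s ^ 2 * (t - η / k)| ≤ 1
  · have hG := half_le_ghostRate (sq_nonneg s) hres
    have hsqrt : s * c / 2 ≤ √(ghostRate (s ^ 2) t k η * m ^ 2) := by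
      rw [le_sqrt (by positivity) (mul_nonneg (ghostRate_nonneg (sq_nonneg s)) (sq_nonneg m))]
      have : c ^ 2 ≤ m ^ 2 := pow_le_pow_left₀ hc.le hcm 2
      nlinarith [mul_le_mul hG this (sq_nonneg c) (ghostRate_nonneg (sq_nonneg s))]
    calc (1 : ℝ) ≤ C * s⁻¹ * (s * c / 2) := by
          field_simp; linarith
      _ ≤ _ := by gcongr; exact le_add_of_le_of_nonneg hsqrt (by positivity)
  · rw [not_le] at hres
    have hk0 : k ≠ 0 := by rintro rfl; norm_num at hk
    have hdist : |t - η / k| ≤ √(k ^ 2 + (η - k * t) ^ 2) := by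
      refine abs_le_sqrt ?_
      rw [show η - k * t = -k * (t - η / k) by field_simp; ring, mul_pow, neg_sq, ← sq_abs k]
      nlinarith [one_le_pow₀ (n := 2) hk, sq_nonneg (t - η / k), sq_nonneg k]
    rw [abs_mul, abs_of_nonneg (sq_nonneg s)] at hres
    calc (1 : ℝ) ≤ C * (s ^ 2 * |t - η / k|) := by nlinarith
      _ = C * s⁻¹ * (s ^ 3 * |t - η / k|) := by field_simp
      _ ≤ C * s⁻¹ * (s ^ 3 * √(k ^ 2 + (η - k * t) ^ 2)) := by gcongr
      _ ≤ _ := by gcongr; exact le_add_of_nonneg_left (sqrt_nonneg _)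

lemma sqrt_ghostRate_mul_sq_le {b mη mξ : ℝ} (hb0 : 0 ≤ b) (hb1 : b ≤ 1) (hk : 1 ≤ |k|)
    (hmη0 : 0 ≤ mη) (hmη1 : mη ≤ 1) (hc : 0 < c) (hcm : c ≤ mξ) (hCc : 2 ≤ C * c) (ξ : ℝ) :
    √(ghostRate b t k η * mη ^ 2) ≤
      C * √(1 + (η - ξ) ^ 2) * √(ghostRate b t k ξ * mξ ^ 2) := by
  have hGη := ghostRate_nonneg (t := t) (k := k) (ξ := η) hb0
  have hGξ := ghostRate_nonneg (t := t) (k := k) (ξ := ξ) hb0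
  have hCm : 2 ≤ C * mξ := hCc.trans (by gcongr; nlinarith)
  have key : ghostRate b t k η * mη ^ 2 ≤
      (C * √(1 + (η - ξ) ^ 2)) ^ 2 * (ghostRate b t k ξ * mξ ^ 2) := by
    rw [mul_pow, sq_sqrt (by positivity)]
    calc ghostRate b t k η * mη ^ 2 ≤ ghostRate b t k η :=
          mul_le_of_le_one_right hGη (pow_le_one₀ hmη0 hmη1)
      _ ≤ 2 * (1 + (η - ξ) ^ 2) * ghostRate b t k ξ := ghostRate_le_mul_ghostRate hb0 hb1 hk η
      _ ≤ (C * mξ) ^ 2 * (1 + (η - ξ) ^ 2) * ghostRate b t k ξ := by gcongr; nlinarith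
      _ = _ := by ring
  calc √(ghostRate b t k η * mη ^ 2)
      ≤ √((C * √(1 + (η - ξ) ^ 2)) ^ 2 * (ghostRate b t k ξ * mξ ^ 2)) := sqrt_le_sqrt key
    _ = _ := by rw [sqrt_mul (sq_nonneg _), sqrt_sq (by nlinarith [sqrt_nonneg (1 + (η - ξ) ^ 2)])]

end Dissipation

lemma rpow_thirds_eq_sixth_root_pow {ν : ℝ} (hν : 0 < ν) :
    ν ^ ((1 : ℝ) / 3) = (ν ^ ((1 : ℝ) / 6)) ^ 2 ∧ ν ^ (-(1 : ℝ) / 6) = (ν ^ ((1 : ℝ) / 6))⁻¹ ∧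
      ν ^ ((1 : ℝ) / 2) = (ν ^ ((1 : ℝ) / 6)) ^ 3 := by
  refine ⟨?_, ?_, ?_⟩
  · rw [← rpow_natCast, ← rpow_mul hν.le]; norm_num
  · rw [← rpow_neg hν.le]; norm_num
  · rw [← rpow_natCast, ← rpow_mul hν.le]; norm_num

/-- Existence of the ghost-energy Fourier multiplier `M` satisfying conditions
(eq:M:cond:1)–(eq:M:cond:6), with constants `c ∈ (0,1)` and `C ≥ 1`
independent of `ν ∈ (0,1]`. -/
theorem stmt_7 :
    ∃ c C : ℝ, c ∈ Set.Ioo (0:ℝ) 1 ∧ 1 ≤ C ∧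
      ∀ ν : ℝ, ν ∈ Set.Ioc (0:ℝ) 1 →
        ∃ M : ℝ → ℤ → ℝ → ℝ,
          -- differentiable in the first and third arguments (on [0,∞))
          (∀ (t : ℝ), 0 ≤ t → ∀ (k : ℤ) (ξ : ℝ),
            DifferentiableAt ℝ (fun τ : ℝ => M τ k ξ) t ∧
            DifferentiableAt ℝ (fun x : ℝ => M t k x) ξ) ∧
          -- (1) normalization
          (∀ (t : ℝ) (k : ℤ) (ξ : ℝ), M 0 k ξ = 1 ∧ M t 0 ξ = 1) ∧
          -- (2) uniform two-sided bounds
          (∀ (t : ℝ), 0 ≤ t → ∀ (k : ℤ) (ξ : ℝ), c ≤ M t k ξ ∧ M t k ξ ≤ 1) ∧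
          -- (3) inviscid damping lower bound on −Ṁ/M
          (∀ (t : ℝ), 0 ≤ t → ∀ (k : ℤ), k ≠ 0 → ∀ ξ : ℝ,
            |(k : ℝ)| / ((k : ℝ) ^ 2 + (ξ - (k : ℝ) * t) ^ 2)
              ≤ -(deriv (fun τ : ℝ => M τ k ξ) t) / M t k ξ) ∧
          -- (4) logarithmic ξ-derivative bound
          (∀ (t : ℝ), 0 ≤ t → ∀ (k : ℤ), k ≠ 0 → ∀ ξ : ℝ,
            |deriv (fun x : ℝ => M t k x) ξ| ≤ C / |(k : ℝ)| * M t k ξ) ∧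
          -- (5) enhanced dissipation
          (∀ (t : ℝ), 0 ≤ t → ∀ (k : ℤ), k ≠ 0 → ∀ η : ℝ,
            1 ≤ C * ν ^ (-(1:ℝ)/6) *
              (Real.sqrt (-(deriv (fun τ : ℝ => M τ k η) t) * M t k η) +
                ν ^ ((1:ℝ)/2) * Real.sqrt ((k : ℝ) ^ 2 + (η - (k : ℝ) * t) ^ 2))) ∧
          -- (6) frequency transfer for √(−Ṁ M)
          (∀ (t : ℝ), 0 ≤ t → ∀ (k : ℤ), k ≠ 0 → ∀ η ξ : ℝ,
            Real.sqrt (-(deriv (fun τ : ℝ => M τ k η) t) * M t k η)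
              ≤ C * Real.sqrt (1 + (η - ξ) ^ 2) *
                  Real.sqrt (-(deriv (fun τ : ℝ => M τ k ξ) t) * M t k ξ)) := by
  have hc : 0 < exp (-(2 * π)) := exp_pos _
  have hCc : 2 ≤ 2 * exp (2 * π) * exp (-(2 * π)) := by rw [mul_assoc, ← exp_add]; simp
  have hC : 2 ≤ 2 * exp (2 * π) := by linarith [one_le_exp (two_pi_pos.le)]
  refine ⟨exp (-(2 * π)), 2 * exp (2 * π), ⟨hc, exp_lt_one_iff.2 (by linarith [pi_pos])⟩,
    by linarith, fun ν ⟨hν0, hν1⟩ => ?_⟩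
  obtain ⟨hb, hν16, hν12⟩ := rpow_thirds_eq_sixth_root_pow hν0
  set s := ν ^ ((1 : ℝ) / 6)
  have hs0 : 0 < s := rpow_pos_of_pos hν0 _
  have hb0 : 0 ≤ s ^ 2 := sq_nonneg s
  have hb1 : s ^ 2 ≤ 1 := pow_le_one₀ hs0.le (rpow_le_one hν0.le hν1 (by norm_num))
  refine ⟨ghostMultiplier (ν ^ ((1 : ℝ) / 3)), ?_⟩
  rw [hb, hν16, hν12]
  refine ⟨fun t _ k ξ => ⟨differentiableAt_ghostMultiplier_time _ t k ξ,
      differentiableAt_ghostMultiplier_space _ t k ξ⟩,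
    fun t k ξ => ⟨ghostMultiplier_zero_time _ k ξ, ghostMultiplier_zero_freq _ t ξ⟩,
    fun t ht k ξ => ⟨exp_neg_two_pi_le_ghostMultiplier _ t k ξ, ghostMultiplier_le_one hb0 ht⟩,
    fun t _ k hk ξ => ?_, fun t _ k hk ξ => ?_, fun t _ k hk η => ?_, fun t ht k hk η ξ => ?_⟩
  · rw [neg_deriv_ghostMultiplier_time_div hk]
    exact div_le_ghostRate hb0 (Int.cast_ne_zero.2 hk)
  · refine (abs_deriv_ghostMultiplier_space_le hb0 hb1 hk).trans ?_
    gcongr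
    exact (ghostMultiplier_pos _ t k ξ).le
  · rw [neg_deriv_ghostMultiplier_time_mul hk]
    exact one_le_enhanced_dissipation hs0 hc (exp_neg_two_pi_le_ghostMultiplier _ t k η)
      (by linarith) hCc (one_le_abs_intCast hk)
  · rw [neg_deriv_ghostMultiplier_time_mul hk, neg_deriv_ghostMultiplier_time_mul hk]
    exact sqrt_ghostRate_mul_sq_le hb0 hb1 (one_le_abs_intCast hk)
      (ghostMultiplier_pos _ t k η).le (ghostMultiplier_le_one hb0 ht) hc
      (exp_neg_two_pi_le_ghostMultiplier _ t k ξ) hCc ξ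
end

section
/- For every integer k with k ≠ 0, every ξ ∈ ℝ, and every t ≥ 0, one has ∫₀ᵗ 2|k|·|ξ − k·s| / (k² + (ξ − k·s)²)² ds ≤ π/k². Consequently M₁(t,k,ξ) = exp(−∫₀ᵗ |k|/(k² + (ξ−ks)²) ds) satisfies |∂_ξ M₁(t,k,ξ)| ≤ (π/k²)·M₁(t,k,ξ). -/
/-!
The shear substitution `y = ξ - k s` turns `∫₀ᵗ f (ξ - k s) ds` into `k⁻¹ ∫_{ξ-kt}^{ξ} f`.
For the first bound, AM–GM gives `2|k||y|/(k² + y²)² ≤ 1/(k² + y²)`, and the integral of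
`1/(k² + y²)` over any interval is a difference of two values of `arctan(·/k)/k`, hence at most
`π/|k|` in absolute value. For the second, the substitution and the fundamental theorem of
calculus give `∂_ξ ∫₀ᵗ g (ξ - k s) ds = (g ξ - g (ξ - k t))/k` with `g = |k|/(k² + ·²)` taking
values in `[0, 1/|k|]`, so `|∂_ξ M₁| ≤ M₁/k² ≤ π M₁/k²`.
-/

open Real intervalIntegral

lemma continuous_div_sq_add_sq (a : ℝ) {c : ℝ} (hc : c ≠ 0) :
    Continuous fun y : ℝ => a / (c ^ 2 + y ^ 2) :=
  continuous_const.div (by fun_prop) fun y => by positivity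

lemma hasDerivAt_arctan_div_div {c : ℝ} (hc : c ≠ 0) (y : ℝ) :
    HasDerivAt (fun y => arctan (y / c) / c) (1 / (c ^ 2 + y ^ 2)) y :=
  (((hasDerivAt_id' y).div_const c).arctan.div_const c).congr_deriv (by field_simp)

lemma integral_one_div_sq_add_sq {c : ℝ} (hc : c ≠ 0) (a b : ℝ) :
    ∫ y in a..b, 1 / (c ^ 2 + y ^ 2) = (arctan (b / c) - arctan (a / c)) / c :=
  integral_eq_sub_of_hasDerivAt (fun y _ => hasDerivAt_arctan_div_div hc y)
    ((continuous_div_sq_add_sq 1 hc).intervalIntegrable a b) |>.trans (by ring)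

lemma abs_integral_one_div_sq_add_sq_le {c : ℝ} (hc : c ≠ 0) (a b : ℝ) :
    |∫ y in a..b, 1 / (c ^ 2 + y ^ 2)| ≤ π / |c| := by
  rw [integral_one_div_sq_add_sq hc, abs_div]
  gcongr
  have := arctan_lt_pi_div_two (b / c)
  have := neg_pi_div_two_lt_arctan (b / c)
  have := arctan_lt_pi_div_two (a / c)
  have := neg_pi_div_two_lt_arctan (a / c)
  exact abs_sub_le_iff.2 ⟨by linarith, by linarith⟩

lemma two_mul_abs_mul_abs_div_sq_le_one_div (c y : ℝ) :
    2 * |c| * |y| / (c ^ 2 + y ^ 2) ^ 2 ≤ 1 / (c ^ 2 + y ^ 2) := by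
  have hAMGM : 2 * |c| * |y| ≤ c ^ 2 + y ^ 2 := by
    simpa only [sq_abs] using two_mul_le_add_sq |c| |y|
  calc 2 * |c| * |y| / (c ^ 2 + y ^ 2) ^ 2 ≤ (c ^ 2 + y ^ 2) / (c ^ 2 + y ^ 2) ^ 2 := by
        gcongr
    _ = 1 / (c ^ 2 + y ^ 2) := by rw [sq (c ^ 2 + y ^ 2), div_self_mul_self', one_div]

theorem integral_two_mul_abs_mul_abs_div_sq_le {c : ℝ} (hc : c ≠ 0) (ξ : ℝ) {t : ℝ}
    (ht : 0 ≤ t) :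
    ∫ s in 0..t, 2 * |c| * |ξ - c * s| / (c ^ 2 + (ξ - c * s) ^ 2) ^ 2 ≤ π / c ^ 2 := by
  have hshear : Continuous fun s => ξ - c * s := by fun_prop
  calc _ ≤ ∫ s in 0..t, 1 / (c ^ 2 + (ξ - c * s) ^ 2) := by
        refine integral_mono_on ht ?_ ?_ fun s _ => two_mul_abs_mul_abs_div_sq_le_one_div c _
        · exact (Continuous.div (by fun_prop) (by fun_prop) fun s => by positivity)
            |>.intervalIntegrable _ _
        · exact ((continuous_div_sq_add_sq 1 hc).comp hshear).intervalIntegrable _ _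
    _ = c⁻¹ * ∫ y in ξ - c * t..ξ - c * 0, 1 / (c ^ 2 + y ^ 2) :=
        integral_comp_sub_mul (fun y => 1 / (c ^ 2 + y ^ 2)) hc ξ
    _ ≤ |c|⁻¹ * (π / |c|) := by
        refine (le_abs_self _).trans ?_
        rw [abs_mul, abs_inv]
        gcongr
        exact abs_integral_one_div_sq_add_sq_le hc _ _
    _ = π / c ^ 2 := by rw [← sq_abs]; ring

theorem hasDerivAt_integral_comp_sub_mul {E : Type*} [NormedAddCommGroup E] [NormedSpace ℝ E]
    [CompleteSpace E] {g : ℝ → E} (hg : Continuous g) {c : ℝ} (hc : c ≠ 0) (t x : ℝ) :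
    HasDerivAt (fun x => ∫ s in 0..t, g (x - c * s)) (c⁻¹ • (g x - g (x - c * t))) x := by
  have hshear : ∀ x, ∫ s in 0..t, g (x - c * s) =
      c⁻¹ • ((∫ y in 0..x, g y) - ∫ y in 0..x - c * t, g y) := fun x => by
    rw [integral_comp_sub_mul g hc, mul_zero, sub_zero,
      integral_interval_sub_left (hg.intervalIntegrable _ _) (hg.intervalIntegrable _ _)]
  simp only [hshear]
  have hprim := fun b => (hg.integral_hasStrictDerivAt 0 b).hasDerivAt
  exact ((hprim x).sub ((hprim (x - c * t)).comp_sub_const x (c * t))).const_smul c⁻¹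

lemma div_sq_add_sq_le_inv_abs {c : ℝ} (hc : c ≠ 0) (y : ℝ) :
    |c| / (c ^ 2 + y ^ 2) ≤ |c|⁻¹ :=
  calc |c| / (c ^ 2 + y ^ 2) ≤ |c| / c ^ 2 := by
        gcongr
        exact le_add_of_nonneg_right (sq_nonneg y)
    _ = |c|⁻¹ := by rw [← sq_abs, sq, div_self_mul_self']

theorem abs_deriv_exp_neg_integral_le {c : ℝ} (hc : c ≠ 0) (t ξ : ℝ) :
    |deriv (fun x => exp (-∫ s in 0..t, |c| / (c ^ 2 + (x - c * s) ^ 2))) ξ|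
      ≤ 1 / c ^ 2 * exp (-∫ s in 0..t, |c| / (c ^ 2 + (ξ - c * s) ^ 2)) := by
  have hF := hasDerivAt_integral_comp_sub_mul (continuous_div_sq_add_sq |c| hc) hc t ξ
  rw [hF.fun_neg.exp.deriv, abs_mul, abs_neg, abs_of_pos (exp_pos _), mul_comm, smul_eq_mul,
    abs_mul, abs_inv]
  gcongr
  calc |c|⁻¹ * |(|c| / (c ^ 2 + ξ ^ 2) - |c| / (c ^ 2 + (ξ - c * t) ^ 2))|
      ≤ |c|⁻¹ * |c|⁻¹ := by
        gcongr
        exact abs_sub_le_of_nonneg_of_le (by positivity) (div_sq_add_sq_le_inv_abs hc _)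
          (by positivity) (div_sq_add_sq_le_inv_abs hc _)
    _ = 1 / c ^ 2 := by rw [← sq_abs]; ring

/-- Bound on the `ξ`-derivative of the inviscid damping multiplier `M₁`:
`∫₀ᵗ 2|k||ξ − k s|/(k² + (ξ − k s)²)² ds ≤ π/k²`, hence
`|∂_ξ M₁(t,k,ξ)| ≤ (π/k²) M₁(t,k,ξ)`. -/
theorem stmt_10 (k : ℤ) (hk : k ≠ 0) (ξ t : ℝ) (ht : 0 ≤ t) :
    (∫ s in (0:ℝ)..t,
        2 * |(k : ℝ)| * |ξ - (k : ℝ) * s| / ((k : ℝ) ^ 2 + (ξ - (k : ℝ) * s) ^ 2) ^ 2)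
      ≤ Real.pi / (k : ℝ) ^ 2 ∧
    |deriv (fun x : ℝ =>
        Real.exp (-∫ s in (0:ℝ)..t, |(k : ℝ)| / ((k : ℝ) ^ 2 + (x - (k : ℝ) * s) ^ 2))) ξ|
      ≤ Real.pi / (k : ℝ) ^ 2 *
          Real.exp (-∫ s in (0:ℝ)..t, |(k : ℝ)| / ((k : ℝ) ^ 2 + (ξ - (k : ℝ) * s) ^ 2)) := by
  have hk' : (k : ℝ) ≠ 0 := Int.cast_ne_zero.2 hk
  refine ⟨integral_two_mul_abs_mul_abs_div_sq_le hk' ξ ht,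
    (abs_deriv_exp_neg_integral_le hk' t ξ).trans ?_⟩
  gcongr
  linarith [pi_gt_three]
end

section
/- For every ν with 0 < ν ≤ 1, every integer k ≠ 0, every η ∈ ℝ, and every t ≥ 0, one has ν^{1/6} ≤ √2 · ( √( ν^{1/3}/(1 + ν^{2/3}·(t − η/k)²) ) + ν^{1/2}·√(k² + (η − k·t)²) ). -/
/-- The key case-split inequality for condition (eq:M:cond:5):
`ν^{1/6} ≤ √2 (√(ν^{1/3}/(1 + ν^{2/3}(t − η/k)²)) + ν^{1/2} √(k² + (η − k t)²))`
for `0 < ν ≤ 1`, integer `k ≠ 0`, and `t ≥ 0`. -/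
theorem stmt_16 (ν : ℝ) (hν : ν ∈ Set.Ioc (0:ℝ) 1) (k : ℤ) (hk : k ≠ 0)
    (η t : ℝ) (ht : 0 ≤ t) :
    ν ^ ((1:ℝ)/6)
      ≤ Real.sqrt 2 *
          (Real.sqrt (ν ^ ((1:ℝ)/3) / (1 + ν ^ ((2:ℝ)/3) * (t - η / (k : ℝ)) ^ 2)) +
            ν ^ ((1:ℝ)/2) * Real.sqrt ((k : ℝ) ^ 2 + (η - (k : ℝ) * t) ^ 2)) := by
  obtain ⟨hν0, hν1⟩ := hν
  have hk0 : (k : ℝ) ≠ 0 := Int.cast_ne_zero.mpr hk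
  have hkabs : (1:ℝ) ≤ |(k : ℝ)| := by
    rw [← Int.cast_abs]
    exact_mod_cast Int.one_le_abs hk
  have hk1 : (1:ℝ) ≤ (k : ℝ) ^ 2 := by
    calc (1:ℝ) = 1 ^ 2 := by ring
    _ ≤ |(k:ℝ)| ^ 2 := pow_le_pow_left₀ zero_le_one hkabs 2
    _ = (k:ℝ) ^ 2 := sq_abs _
  have hν13 : (0:ℝ) < ν ^ ((1:ℝ)/3) := Real.rpow_pos_of_pos hν0 _
  set x := (t - η / (k : ℝ)) ^ 2 with hx
  have hx0 : 0 ≤ x := sq_nonneg _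
  have hsq : (η - (k : ℝ) * t) ^ 2 = (k:ℝ)^2 * x := by
    have h : η - (k:ℝ) * t = -((k:ℝ) * (t - η / (k:ℝ))) := by field_simp; ring
    rw [hx, h]; ring
  have hterm2 : 0 ≤ ν ^ ((1:ℝ)/2) * Real.sqrt ((k : ℝ) ^ 2 + (η - (k : ℝ) * t) ^ 2) := by
    positivity
  have hs2 : (1:ℝ) ≤ Real.sqrt 2 := by
    rw [show (1:ℝ) = Real.sqrt 1 by simp]
    exact Real.sqrt_le_sqrt (by norm_num)
  rcases le_or_gt (ν ^ ((2:ℝ)/3) * x) 1 with hc | hc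
  · -- first term dominates
    have h1 : ν ^ ((1:ℝ)/3) / 2 ≤ ν ^ ((1:ℝ)/3) / (1 + ν ^ ((2:ℝ)/3) * x) :=
      div_le_div_of_nonneg_left hν13.le (by positivity) (by linarith)
    have h3 : Real.sqrt (ν ^ ((1:ℝ)/3) / 2) = ν ^ ((1:ℝ)/6) / Real.sqrt 2 := by
      rw [Real.sqrt_div hν13.le, Real.sqrt_eq_rpow, ← Real.rpow_mul hν0.le]
      norm_num
    have h2 : ν ^ ((1:ℝ)/6) / Real.sqrt 2
        ≤ Real.sqrt (ν ^ ((1:ℝ)/3) / (1 + ν ^ ((2:ℝ)/3) * x)) := by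
      rw [← h3]; exact Real.sqrt_le_sqrt h1
    have hs2pos : (0:ℝ) < Real.sqrt 2 := by linarith
    calc ν ^ ((1:ℝ)/6) = Real.sqrt 2 * (ν ^ ((1:ℝ)/6) / Real.sqrt 2) := by
          field_simp
      _ ≤ Real.sqrt 2 * (Real.sqrt (ν ^ ((1:ℝ)/3) / (1 + ν ^ ((2:ℝ)/3) * x))
            + ν ^ ((1:ℝ)/2) * Real.sqrt ((k : ℝ) ^ 2 + (η - (k : ℝ) * t) ^ 2)) := by
          apply mul_le_mul_of_nonneg_left _ hs2pos.le
          linarith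
  · -- second term dominates
    have hxge : ν ^ (-(2:ℝ)/3) ≤ x := by
      have h := (div_le_iff₀ (Real.rpow_pos_of_pos hν0 ((2:ℝ)/3))).mpr
        (by linarith [mul_comm (ν ^ ((2:ℝ)/3)) x] : (1:ℝ) ≤ x * ν ^ ((2:ℝ)/3))
      calc ν ^ (-(2:ℝ)/3) = 1 / ν ^ ((2:ℝ)/3) := by
            rw [show (-2:ℝ)/3 = -((2:ℝ)/3) by ring, Real.rpow_neg hν0.le, inv_eq_one_div]
        _ ≤ x := h
    have hge : ν ^ (-(2:ℝ)/3) ≤ (k : ℝ) ^ 2 + (η - (k : ℝ) * t) ^ 2 := by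
      rw [hsq]
      have : x ≤ (k:ℝ)^2 * x := le_mul_of_one_le_left hx0 hk1
      nlinarith [sq_nonneg ((k:ℝ))]
    have hsqrt : ν ^ (-(1:ℝ)/3) ≤ Real.sqrt ((k : ℝ) ^ 2 + (η - (k : ℝ) * t) ^ 2) := by
      have h := Real.sqrt_le_sqrt hge
      have : Real.sqrt (ν ^ (-(2:ℝ)/3)) = ν ^ (-(1:ℝ)/3) := by
        rw [Real.sqrt_eq_rpow, ← Real.rpow_mul hν0.le]
        norm_num
      linarith [this ▸ h]
    have hkey : ν ^ ((1:ℝ)/6) ≤ ν ^ ((1:ℝ)/2) * Real.sqrt ((k : ℝ) ^ 2 + (η - (k : ℝ) * t) ^ 2) := by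
      have h := mul_le_mul_of_nonneg_left hsqrt (Real.rpow_nonneg hν0.le ((1:ℝ)/2))
      have heq : ν ^ ((1:ℝ)/2) * ν ^ (-(1:ℝ)/3) = ν ^ ((1:ℝ)/6) := by
        rw [← Real.rpow_add hν0]; norm_num
      linarith [heq ▸ h]
    have hfirst : 0 ≤ Real.sqrt (ν ^ ((1:ℝ)/3) / (1 + ν ^ ((2:ℝ)/3) * x)) := Real.sqrt_nonneg _
    calc ν ^ ((1:ℝ)/6) = 1 * ν ^ ((1:ℝ)/6) := by ring
      _ ≤ Real.sqrt 2 * (Real.sqrt (ν ^ ((1:ℝ)/3) / (1 + ν ^ ((2:ℝ)/3) * x))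
            + ν ^ ((1:ℝ)/2) * Real.sqrt ((k : ℝ) ^ 2 + (η - (k : ℝ) * t) ^ 2)) := by
          apply mul_le_mul hs2 (by linarith) (by positivity) (by linarith)
end
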